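/- For 1 ≤ s, t ≤ 2g let f_s ∈ Hom_R(H, Λ²H) be the map f_s(x) = x ∧ e_s. Then for all x ∈ H, Υ_{f_t}(f_s(x)) − Υ_{f_s}(f_t(x)) = ν(x, e_s ∧ e_t). -/

import Mathlib

/-!
Unfolding `Υ`, the left-hand side is `2ν(x, e_s∧e_t) − ν(e_s, x∧e_t) + ν(e_t, x∧e_s)`, so by
antisymmetry of `∧` the claim is the vanishing of the cyclic sum
`ν(u, v∧w) + ν(v, w∧u) + ν(w, u∧v)`, which holds because `2/3 − 1/3 − 1/3 = 0`.
-/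

namespace Paper

open ExteriorAlgebra

open scoped TensorProduct

variable {R : Type*} [CommRing R] {H : Type*} [AddCommGroup H] [Module R H]

theorem wedge_mem (v w : H) : ι R v * ι R w ∈ ⋀[R]^2 H := by
  rw [show (⋀[R]^2 H) = LinearMap.range (ι R (M := H)) * LinearMap.range (ι R (M := H)) from
    sq _]
  exact Submodule.mul_mem_mul (LinearMap.mem_range_self _ v) (LinearMap.mem_range_self _ w)

/-- The wedge product `H × H → Λ²H` as a bilinear map. -/
noncomputable def wedge : H →ₗ[R] H →ₗ[R] ↥(⋀[R]^2 H) :=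
  LinearMap.mk₂ R (fun v w => ⟨ι R v * ι R w, wedge_mem v w⟩)
    (fun v v' w => Subtype.ext (by simp [add_mul]))
    (fun c v w => Subtype.ext (by simp [smul_mul_assoc]))
    (fun v w w' => Subtype.ext (by simp [mul_add]))
    (fun c v w => Subtype.ext (by simp [mul_smul_comm]))

/-- The submodule `𝔱 ⊆ H ⊗ Λ²H` spanned by the elements `u⊗(v∧w) − v⊗(w∧u)`. -/
noncomputable def tSub (R : Type*) [CommRing R] (H : Type*) [AddCommGroup H] [Module R H] :
    Submodule R (H ⊗[R] ↥(⋀[R]^2 H)) :=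
  Submodule.span R
    {x | ∃ u v w : H, x = u ⊗ₜ[R] (wedge v w) - v ⊗ₜ[R] (wedge w u)}

theorem map_exteriorPower_le (f : H →ₗ[R] H) (n : ℕ) :
    Submodule.map (ExteriorAlgebra.map f).toLinearMap (⋀[R]^n H) ≤ ⋀[R]^n H := by
  rw [show ((⋀[R]^n H : Submodule R (ExteriorAlgebra R H))) =
      (LinearMap.range (ι R (M := H))) ^ n from rfl, Submodule.map_pow]
  have h1 : Submodule.map (ExteriorAlgebra.map f).toLinearMap
      (LinearMap.range (ι R (M := H))) ≤ LinearMap.range (ι R (M := H)) := by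
    intro x hx
    rw [Submodule.mem_map] at hx
    obtain ⟨y, hy, rfl⟩ := hx
    rw [LinearMap.mem_range] at hy
    obtain ⟨v, rfl⟩ := hy
    exact ⟨f v, (map_apply_ι f v).symm⟩
  induction n with
  | zero => simp
  | succ n ih =>
      rw [pow_succ, pow_succ]
      exact mul_le_mul' ih h1

/-- The endomorphism `Λ²f` of `Λ²H` induced by an endomorphism `f` of `H`. -/
noncomputable def map2 (f : H →ₗ[R] H) : ↥(⋀[R]^2 H) →ₗ[R] ↥(⋀[R]^2 H) :=
  (ExteriorAlgebra.map f).toLinearMap.restrict (p := ⋀[R]^2 H) (q := ⋀[R]^2 H)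
    (fun x hx => map_exteriorPower_le f 2 (Submodule.mem_map_of_mem hx))

theorem map2_wedge (f : H →ₗ[R] H) (v w : H) :
    map2 f (wedge (R := R) v w) = wedge (R := R) (f v) (f w) :=
  Subtype.ext (by simp [map2, LinearMap.restrict_apply, wedge, map_apply_ι])

theorem tSub_stable (A : H →ₗ[R] H) (x : H ⊗[R] ↥(⋀[R]^2 H)) (hx : x ∈ tSub R H) :
    TensorProduct.map A (map2 A) x ∈ tSub R H := by
  induction hx using Submodule.span_induction with
  | mem y hy =>
      obtain ⟨u, v, w, rfl⟩ := hy
      rw [map_sub, TensorProduct.map_tmul, TensorProduct.map_tmul, map2_wedge, map2_wedge]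
      exact Submodule.subset_span ⟨A u, A v, A w, rfl⟩
  | zero => simpa using Submodule.zero_mem _
  | add a b ha hb iha ihb => rw [map_add]; exact Submodule.add_mem _ iha ihb
  | smul c a ha iha => rw [map_smul]; exact Submodule.smul_mem _ _ iha

/-- The action of an endomorphism `A` of `H` on `𝔱 ⊆ H ⊗ Λ²H`, by `A ⊗ Λ²A`. -/
noncomputable def tRestrict (A : H →ₗ[R] H) : ↥(tSub R H) →ₗ[R] ↥(tSub R H) :=
  (TensorProduct.map A (map2 A)).restrict (p := tSub R H) (q := tSub R H) (tSub_stable A)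


/-- Helper instances for the submodule `𝔱` (typeclass search struggles with the nested
subtype). -/
noncomputable instance tSubAddCommGroup : AddCommGroup ↥(tSub R H) :=
  @Submodule.addCommGroup R (H ⊗[R] ↥(⋀[R]^2 H)) _ _ _ (tSub R H)

noncomputable instance tSubModule : Module R ↥(tSub R H) :=
  @Submodule.module R (H ⊗[R] ↥(⋀[R]^2 H)) _ _ _ (tSub R H)

theorem wedge_swap (v w : H) : wedge (R := R) w v = -wedge (R := R) v w :=
  Subtype.ext (eq_neg_of_add_eq_zero_left (ι_add_mul_swap w v))

theorem nu_cyclic_sum_eq_zero [Invertible (3 : R)]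
    (ν : H →ₗ[R] ↥(⋀[R]^2 H) →ₗ[R] ↥(tSub R H))
    (hν : ∀ u v w : H,
      (↑(ν u (wedge (R := R) v w)) : H ⊗[R] ↥(⋀[R]^2 H)) =
        ((2 : R) * ⅟(3 : R)) • u ⊗ₜ[R] wedge (R := R) v w -
          ⅟(3 : R) • v ⊗ₜ[R] wedge (R := R) w u -
          ⅟(3 : R) • w ⊗ₜ[R] wedge (R := R) u v)
    (u v w : H) :
    ν u (wedge v w) + ν v (wedge w u) + ν w (wedge u v) = 0 := by
  apply Subtype.ext
  simp only [Submodule.coe_add, hν, Submodule.coe_zero]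
  module

theorem upsilon_flip_wedge_sub_eq_nu
    (ν : H →ₗ[R] ↥(⋀[R]^2 H) →ₗ[R] ↥(tSub R H))
    (hν : ∀ u v w : H, ν u (wedge v w) + ν v (wedge w u) + ν w (wedge u v) = 0)
    (Υ : (H →ₗ[R] ↥(⋀[R]^2 H)) → (↥(⋀[R]^2 H) →ₗ[R] ↥(tSub R H)))
    (hΥ : ∀ (f : H →ₗ[R] ↥(⋀[R]^2 H)) (u v : H),
      Υ f (wedge (R := R) u v) = ν u (f v) - ν v (f u))
    (a b x : H) :
    Υ (wedge.flip b) (wedge x a) - Υ (wedge.flip a) (wedge x b) = ν x (wedge a b) := by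
  have hcyclic := hν x a b
  rw [wedge_swap x b, map_neg] at hcyclic
  simp only [hΥ, LinearMap.flip_apply]
  rw [wedge_swap a b, map_neg, ← sub_eq_zero, ← hcyclic]
  abel

section Stmt13

variable [Invertible (2 : R)] [Invertible (3 : R)]

theorem stmt13_general {g : ℕ}
    (e : Module.Basis (Fin (2 * g)) R H)
    (ν : H →ₗ[R] ↥(⋀[R]^2 H) →ₗ[R] ↥(tSub R H))
    (hν : ∀ u v w : H,
      (↑(ν u (wedge (R := R) v w)) : H ⊗[R] ↥(⋀[R]^2 H)) =
        ((2 : R) * ⅟(3 : R)) • u ⊗ₜ[R] wedge (R := R) v w -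
          ⅟(3 : R) • v ⊗ₜ[R] wedge (R := R) w u -
          ⅟(3 : R) • w ⊗ₜ[R] wedge (R := R) u v)
    (Υ : (H →ₗ[R] ↥(⋀[R]^2 H)) → (↥(⋀[R]^2 H) →ₗ[R] ↥(tSub R H)))
    (hΥ : ∀ (f : H →ₗ[R] ↥(⋀[R]^2 H)) (u v : H),
      Υ f (wedge (R := R) u v) = ν u (f v) - ν v (f u))
    (s t : Fin (2 * g)) (x : H) :
    Υ (LinearMap.flip (wedge (R := R)) (e t)) (wedge (R := R) x (e s)) -
        Υ (LinearMap.flip (wedge (R := R)) (e s)) (wedge (R := R) x (e t)) =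
      ν x (wedge (R := R) (e s) (e t)) :=
  upsilon_flip_wedge_sub_eq_nu ν (nu_cyclic_sum_eq_zero ν hν) Υ hΥ (e s) (e t) x

/-- For `f_s ∈ Hom(H, Λ²H)` given by `f_s(x) = x ∧ e_s`, one has
`Υ_{f_t}(f_s(x)) − Υ_{f_s}(f_t(x)) = ν(x, e_s ∧ e_t)` for all `x ∈ H`. -/
theorem stmt13 (P : Ideal ℤ) [P.IsPrime] (hP2 : (2 : ℤ) ∉ P) (hP3 : (3 : ℤ) ∉ P)
    [Algebra ℤ R] [IsLocalization.AtPrime R P] {g : ℕ} (hg : 1 ≤ g)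
    (e : Module.Basis (Fin (2 * g)) R H)
    (ν : H →ₗ[R] ↥(⋀[R]^2 H) →ₗ[R] ↥(tSub R H))
    (hν : ∀ u v w : H,
      (↑(ν u (wedge (R := R) v w)) : H ⊗[R] ↥(⋀[R]^2 H)) =
        ((2 : R) * ⅟(3 : R)) • u ⊗ₜ[R] wedge (R := R) v w -
          ⅟(3 : R) • v ⊗ₜ[R] wedge (R := R) w u -
          ⅟(3 : R) • w ⊗ₜ[R] wedge (R := R) u v)
    (Υ : (H →ₗ[R] ↥(⋀[R]^2 H)) → (↥(⋀[R]^2 H) →ₗ[R] ↥(tSub R H)))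
    (hΥ : ∀ (f : H →ₗ[R] ↥(⋀[R]^2 H)) (u v : H),
      Υ f (wedge (R := R) u v) = ν u (f v) - ν v (f u))
    (s t : Fin (2 * g)) (x : H) :
    Υ (LinearMap.flip (wedge (R := R)) (e t)) (wedge (R := R) x (e s)) -
        Υ (LinearMap.flip (wedge (R := R)) (e s)) (wedge (R := R) x (e t)) =
      ν x (wedge (R := R) (e s) (e t)) :=
  stmt13_general e ν hν Υ hΥ s t x

end Stmt13

end Paper
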